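/- arXiv:2506.14124 — 2 statements merged into one kernel-verified Lean document; each statement's English description precedes it below -/
import Mathlib

section
/- With epoch and validators defined recursively as above, if L and L' both extend the genesis, L extends L', and epoch(L) = epoch(L'), then validators(L) = validators(L'). -/
/-- The epoch of a log, defined recursively. -/
def epochFn {Tx : Type*} [DecidableEq Tx] (Lg : List Tx)
    (completed : List Tx → Bool) (L : List Tx) : ℕ :=
  if h : L = [] ∨ L = Lg then 0
  else
    epochFn Lg completed L.dropLast + (if completed L.dropLast then 1 else 0)
termination_by L.length
decreasing_by
  have hne : L ≠ [] := fun hL => h (Or.inl hL)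
  have : L.length ≠ 0 := by simpa using hne
  simp [List.length_dropLast]
  omega

/-- The validator set of a log, defined recursively: it equals the validator
set of the predecessor if the predecessor is not completed, and otherwise
the current ids of the predecessor. -/
def validatorsFn {Tx ID : Type*} [DecidableEq Tx] (Lg : List Tx)
    (completed : List Tx → Bool) (currentIds : List Tx → Finset ID)
    (L : List Tx) : Finset ID :=
  if h : L = [] ∨ L = Lg then currentIds Lg
  else
    if completed L.dropLast then currentIds L.dropLast
    else validatorsFn Lg completed currentIds L.dropLast
termination_by L.length
decreasing_by
  have hne : L ≠ [] := fun hL => h (Or.inl hL)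
  have : L.length ≠ 0 := by simpa using hne
  simp [List.length_dropLast]
  omega

/-!
Write `L = L' ++ t` and peel the entries of `t` off from the end. Each step adds `1` to the
epoch exactly when the predecessor is completed, and the epoch never decreases, so equal epochs
at both ends force every predecessor strictly between `L'` and `L` to be uncompleted; along
such steps the validator set is inherited unchanged.
-/

lemma append_singleton_not_nil_or_eq_of_prefix {Tx : Type*} {Lg M : List Tx} (hM : Lg <+: M)
    (x : Tx) :
    ¬(M ++ [x] = [] ∨ M ++ [x] = Lg) := by
  rintro (hnil | rfl)
  · simp at hnil
  · simpa using hM.length_le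

section

variable {Tx ID : Type*} [DecidableEq Tx] {Lg : List Tx} (completed : List Tx → Bool)
  (currentIds : List Tx → Finset ID)

lemma epochFn_append_singleton {M : List Tx} (hM : Lg <+: M) (x : Tx) :
    epochFn Lg completed (M ++ [x])
      = epochFn Lg completed M + if completed M then 1 else 0 := by
  rw [epochFn, dif_neg (append_singleton_not_nil_or_eq_of_prefix hM x), List.dropLast_concat]

lemma validatorsFn_append_singleton {M : List Tx} (hM : Lg <+: M) (x : Tx) :
    validatorsFn Lg completed currentIds (M ++ [x])
      = if completed M then currentIds M else validatorsFn Lg completed currentIds M := by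
  rw [validatorsFn, dif_neg (append_singleton_not_nil_or_eq_of_prefix hM x),
    List.dropLast_concat]

lemma epochFn_le_append {M : List Tx} (hM : Lg <+: M) (t : List Tx) :
    epochFn Lg completed M ≤ epochFn Lg completed (M ++ t) := by
  induction t using List.reverseRecOn with
  | nil => simp
  | append_singleton t x ih =>
    rw [← List.append_assoc,
      epochFn_append_singleton completed (hM.trans (List.prefix_append M t))]
    omega

lemma validatorsFn_append_of_epochFn_eq {M : List Tx} (hM : Lg <+: M) (t : List Tx)
    (he : epochFn Lg completed (M ++ t) = epochFn Lg completed M) :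
    validatorsFn Lg completed currentIds (M ++ t) = validatorsFn Lg completed currentIds M := by
  induction t using List.reverseRecOn with
  | nil => simp
  | append_singleton t x ih =>
    have hMt : Lg <+: M ++ t := hM.trans (List.prefix_append M t)
    rw [← List.append_assoc, epochFn_append_singleton completed hMt] at he
    cases hc : completed (M ++ t)
    · simp only [hc, Bool.false_eq_true, if_false, add_zero] at he
      rw [← List.append_assoc, validatorsFn_append_singleton completed currentIds hMt, hc]
      exact ih he
    · have hle := epochFn_le_append completed hM t
      simp only [hc, if_true] at he
      omega

end

theorem validators_eq_of_same_epoch_general {Tx ID : Type*} [DecidableEq Tx]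
    (Lg : List Tx) (completed : List Tx → Bool)
    (currentIds : List Tx → Finset ID)
    (L L' : List Tx) (hL' : Lg <+: L')
    (h : L' <+: L)
    (he : epochFn Lg completed L = epochFn Lg completed L') :
    validatorsFn Lg completed currentIds L
      = validatorsFn Lg completed currentIds L' := by
  obtain ⟨t, rfl⟩ := h
  exact validatorsFn_append_of_epochFn_eq completed currentIds hL' t he

theorem validators_eq_of_same_epoch {Tx ID : Type*} [DecidableEq Tx]
    (Lg : List Tx) (completed : List Tx → Bool) (hg : completed Lg = true)
    (currentIds : List Tx → Finset ID)
    (L L' : List Tx) (hL : Lg <+: L) (hL' : Lg <+: L')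
    (h : L' <+: L)
    (he : epochFn Lg completed L = epochFn Lg completed L') :
    validatorsFn Lg completed currentIds L
      = validatorsFn Lg completed currentIds L' :=
  validators_eq_of_same_epoch_general Lg completed currentIds L L' hL' h he
end

section
/- If two subsets I1, I2 of a validator set V with total stake T each carry stake at least (1−ρ)·T where ρ < 1/2, and every identifier in I1 ∩ I2 signed two inconsistent logs (hence is guilty), then the guilty identifiers carry stake strictly greater than 0; more precisely at least (1−2ρ)·T, and if additionally ρ < 1/3 this exceeds ρ·T, i.e., strictly more stake is accountable than the adversary's corruption budget ρ·T. -/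
open scoped NNReal

theorem accountable_guilty_stake {ID : Type*} [DecidableEq ID]
    (V : Finset ID) (S : ID → ℝ≥0) (T ρ : ℝ)
    (hVT : (∑ id ∈ V, (S id : ℝ)) = T) (hT : 0 < T)
    (hρ0 : 0 ≤ ρ) (hρ : ρ < 1 / 3)
    (I1 I2 : Finset ID) (hI1 : I1 ⊆ V) (hI2 : I2 ⊆ V)
    (h1 : (1 - ρ) * T ≤ ∑ id ∈ I1, (S id : ℝ))
    (h2 : (1 - ρ) * T ≤ ∑ id ∈ I2, (S id : ℝ)) :
    0 < (∑ id ∈ I1 ∩ I2, (S id : ℝ)) ∧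
      (1 - 2 * ρ) * T ≤ (∑ id ∈ I1 ∩ I2, (S id : ℝ)) ∧
      ρ * T < (∑ id ∈ I1 ∩ I2, (S id : ℝ)) := by
  have hunion : (∑ id ∈ I1 ∪ I2, (S id : ℝ)) ≤ T := by
    rw [← hVT]
    exact Finset.sum_le_sum_of_subset_of_nonneg (Finset.union_subset hI1 hI2)
      (fun i _ _ => (S i).coe_nonneg)
  have hkey : (∑ id ∈ I1 ∪ I2, (S id : ℝ)) + (∑ id ∈ I1 ∩ I2, (S id : ℝ))
      = (∑ id ∈ I1, (S id : ℝ)) + (∑ id ∈ I2, (S id : ℝ)) :=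
    Finset.sum_union_inter
  have h2' : (1 - 2 * ρ) * T ≤ (∑ id ∈ I1 ∩ I2, (S id : ℝ)) := by nlinarith
  have h3' : ρ * T < (∑ id ∈ I1 ∩ I2, (S id : ℝ)) := by nlinarith
  exact ⟨lt_of_le_of_lt (by positivity) h3', h2', h3'⟩
end
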